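/- arXiv:2304.00337 — 2 statements merged into one kernel-verified Lean document; each statement's English description precedes it below -/
import Mathlib

section
/- Let Ω = [0,a]×[0,b], k ∈ ℝ² with k ≠ 0 and k ∈ [−π/a,π/a]×[−π/b,π/b], and φ ∈ C¹(Ω) such that ∇φ satisfies the vector Bloch boundary conditions (∂₁φ)(x₁,b) = exp(i k₂ b)(∂₁φ)(x₁,0) and (∂₂φ)(a,x₂) = exp(i k₁ a)(∂₂φ)(0,x₂). Then there exists a constant m ∈ ℂ such that φ̂ := φ − m satisfies the scalar Bloch boundary conditions φ̂(x₁,b) = exp(i k₂ b) φ̂(x₁,0) for all x₁ ∈ [0,a] and φ̂(a,x₂) = exp(i k₁ a) φ̂(0,x₂) for all x₂ ∈ [0,b]. -/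
open Complex

/-- Partial derivative with respect to the first variable. -/
noncomputable def pd1 (f : ℝ → ℝ → ℂ) (x y : ℝ) : ℂ := deriv (fun t => f t y) x

/-- Partial derivative with respect to the second variable. -/
noncomputable def pd2 (f : ℝ → ℝ → ℂ) (x y : ℝ) : ℂ := deriv (fun t => f x t) y


/-- A continuous function on `[0,L]` with zero derivative on `(0,L)` is constant. -/
lemma constOn_of_deriv_zero (L : ℝ) (hL : 0 < L) (f : ℝ → ℂ)
    (hc : ContinuousOn f (Set.Icc 0 L))
    (hd : ∀ x ∈ Set.Ioo 0 L, HasDerivAt f 0 x) :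
    ∀ x ∈ Set.Icc 0 L, f x = f 0 := by
  have pair : ∀ u v : ℝ, u ∈ Set.Ioo 0 L → v ∈ Set.Ioo 0 L → u ≤ v → f v = f u := by
    intro u v hu hv huv
    have := constant_of_has_deriv_right_zero (f := f) (a := u) (b := v) ?_ ?_
    · exact this v (Set.right_mem_Icc.2 huv)
    · intro z hz
      exact (hd z ⟨lt_of_lt_of_le hu.1 hz.1, lt_of_le_of_lt hz.2 hv.2⟩).continuousAt.continuousWithinAt
    · intro z hz
      exact (hd z ⟨lt_of_lt_of_le hu.1 hz.1, lt_trans hz.2 hv.2⟩).hasDerivWithinAt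
  have hmid : L / 2 ∈ Set.Ioo 0 L := ⟨by linarith, by linarith⟩
  have hIoo : ∀ x ∈ Set.Ioo 0 L, f x = f (L / 2) := by
    intro x hx
    rcases le_total x (L / 2) with h | h
    · exact (pair x (L / 2) hx hmid h).symm
    · exact pair (L / 2) x hmid hx h
  have endpoint : ∀ x : ℝ, x ∈ Set.Icc 0 L → f x = f (L / 2) := by
    intro x hx
    rcases eq_or_lt_of_le hx.1 with h0x | h0x
    · have hcl : (0 : ℝ) ∈ closure (Set.Ioo 0 L) := by
        rw [closure_Ioo hL.ne]; exact ⟨le_rfl, hL.le⟩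
      have hne : (nhdsWithin (0 : ℝ) (Set.Ioo 0 L)).NeBot :=
        mem_closure_iff_nhdsWithin_neBot.mp hcl
      have t1 : Filter.Tendsto f (nhdsWithin 0 (Set.Ioo 0 L)) (nhds (f 0)) :=
        (hc 0 ⟨le_rfl, hL.le⟩).mono Set.Ioo_subset_Icc_self
      have t2 : Filter.Tendsto f (nhdsWithin 0 (Set.Ioo 0 L)) (nhds (f (L / 2))) := by
        refine Filter.Tendsto.congr' ?_ tendsto_const_nhds
        filter_upwards [self_mem_nhdsWithin] with y hy
        exact (hIoo y hy).symm
      rw [← h0x] at *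
      exact tendsto_nhds_unique t1 t2
    rcases eq_or_lt_of_le hx.2 with hxL | hxL
    · have hcl : L ∈ closure (Set.Ioo 0 L) := by
        rw [closure_Ioo hL.ne]; exact ⟨hL.le, le_rfl⟩
      have hne : (nhdsWithin L (Set.Ioo 0 L)).NeBot :=
        mem_closure_iff_nhdsWithin_neBot.mp hcl
      have t1 : Filter.Tendsto f (nhdsWithin L (Set.Ioo 0 L)) (nhds (f L)) :=
        (hc L ⟨hL.le, le_rfl⟩).mono Set.Ioo_subset_Icc_self
      have t2 : Filter.Tendsto f (nhdsWithin L (Set.Ioo 0 L)) (nhds (f (L / 2))) := by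
        refine Filter.Tendsto.congr' ?_ tendsto_const_nhds
        filter_upwards [self_mem_nhdsWithin] with y hy
        exact (hIoo y hy).symm
      rw [hxL]
      exact tendsto_nhds_unique t1 t2
    · exact hIoo x ⟨h0x, hxL⟩
  intro x hx
  rw [endpoint x hx, ← endpoint 0 ⟨le_rfl, hL.le⟩]

lemma exp_I_ne_one (k L : ℝ) (hL : 0 < L) (hk : k ≠ 0)
    (h1 : -(Real.pi / L) ≤ k) (h2 : k ≤ Real.pi / L) :
    Complex.exp (Complex.I * k * L) ≠ 1 := by
  intro h
  rw [Complex.exp_eq_one_iff] at h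
  obtain ⟨n, hn⟩ := h
  have hC : (Complex.I : ℂ) * (k * L) = Complex.I * (2 * Real.pi * n) := by
    linear_combination hn
  have hC' : ((k * L : ℝ) : ℂ) = ((2 * Real.pi * n : ℝ) : ℂ) := by
    have := mul_left_cancel₀ Complex.I_ne_zero hC
    push_cast
    exact this
  have hre : k * L = 2 * Real.pi * n := Complex.ofReal_inj.mp hC'
  have hub : k * L ≤ Real.pi := (le_div_iff₀ hL).mp h2
  have hlb : -Real.pi ≤ k * L := by
    have h := mul_le_mul_of_nonneg_right h1 hL.le
    rw [neg_mul, div_mul_cancel₀ _ hL.ne'] at h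
    exact h
  rcases eq_or_ne n 0 with h0 | h0
  · subst h0
    simp at hre
    rcases hre with h | h
    · exact hk h
    · exact hL.ne' h
  · rcases h0.lt_or_gt with hneg | hpos
    · have hn1 : n ≤ -1 := by omega
      have : (n : ℝ) ≤ -1 := by
        by_contra hcon; push_neg at hcon
        have : (-1:ℝ) < n := hcon
        exact absurd (by exact_mod_cast this : (-1:ℤ) < n) (by omega)
      nlinarith [Real.pi_pos]
    · have : (1 : ℝ) ≤ (n : ℝ) := by exact_mod_cast hpos
      nlinarith [Real.pi_pos]

lemma slice1_hasDeriv (a b : ℝ) (φ : ℝ → ℝ → ℂ)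
    (hφ : ContDiffOn ℝ 1 (fun x : ℝ × ℝ => φ x.1 x.2) (Set.Icc ((0:ℝ),(0:ℝ)) (a,b)))
    (x1 : ℝ) (hx1 : x1 ∈ Set.Ioo 0 a) (y : ℝ) (hy : y ∈ Set.Icc 0 b) :
    HasDerivAt (fun t => φ t y) (pd1 φ x1 y) x1 := by
  have hf := hφ.differentiableOn one_ne_zero
  have maps : Set.MapsTo (fun t : ℝ => ((t, y) : ℝ × ℝ)) (Set.Icc 0 a)
      (Set.Icc ((0:ℝ),(0:ℝ)) (a,b)) := by
    intro t ht
    simp only [Set.mem_Icc, Prod.mk_le_mk] at *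
    exact ⟨⟨ht.1, hy.1⟩, ⟨ht.2, hy.2⟩⟩
  have hγ : DifferentiableWithinAt ℝ (fun t : ℝ => ((t, y) : ℝ × ℝ)) (Set.Icc 0 a) x1 :=
    (differentiableAt_fun_id.prodMk (differentiableAt_const y)).differentiableWithinAt
  have hcomp : DifferentiableWithinAt ℝ
      ((fun p : ℝ × ℝ => φ p.1 p.2) ∘ (fun t : ℝ => (t, y))) (Set.Icc 0 a) x1 :=
    (hf _ (maps (Set.Ioo_subset_Icc_self hx1))).comp x1 hγ maps
  have hda : DifferentiableAt ℝ (fun t => φ t y) x1 :=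
    hcomp.differentiableAt (Icc_mem_nhds hx1.1 hx1.2)
  exact hda.hasDerivAt

lemma slice2_hasDeriv (a b : ℝ) (φ : ℝ → ℝ → ℂ)
    (hφ : ContDiffOn ℝ 1 (fun x : ℝ × ℝ => φ x.1 x.2) (Set.Icc ((0:ℝ),(0:ℝ)) (a,b)))
    (x2 : ℝ) (hx2 : x2 ∈ Set.Ioo 0 b) (x : ℝ) (hx : x ∈ Set.Icc 0 a) :
    HasDerivAt (fun t => φ x t) (pd2 φ x x2) x2 := by
  have hf := hφ.differentiableOn one_ne_zero
  have maps : Set.MapsTo (fun t : ℝ => ((x, t) : ℝ × ℝ)) (Set.Icc 0 b)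
      (Set.Icc ((0:ℝ),(0:ℝ)) (a,b)) := by
    intro t ht
    simp only [Set.mem_Icc, Prod.mk_le_mk] at *
    exact ⟨⟨hx.1, ht.1⟩, ⟨hx.2, ht.2⟩⟩
  have hγ : DifferentiableWithinAt ℝ (fun t : ℝ => ((x, t) : ℝ × ℝ)) (Set.Icc 0 b) x2 :=
    ((differentiableAt_const x).prodMk differentiableAt_fun_id).differentiableWithinAt
  have hcomp : DifferentiableWithinAt ℝ
      ((fun p : ℝ × ℝ => φ p.1 p.2) ∘ (fun t : ℝ => (x, t))) (Set.Icc 0 b) x2 :=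
    (hf _ (maps (Set.Ioo_subset_Icc_self hx2))).comp x2 hγ maps
  have hda : DifferentiableAt ℝ (fun t => φ x t) x2 :=
    hcomp.differentiableAt (Icc_mem_nhds hx2.1 hx2.2)
  exact hda.hasDerivAt

/-- if `∇φ` satisfies the vector Bloch boundary conditions with
`k ≠ 0`, `k ∈ [−π/a,π/a]×[−π/b,π/b]`, then a constant shift of `φ` satisfies
the scalar Bloch boundary conditions. -/
theorem stmt_3 (a b : ℝ) (ha : 0 < a) (hb : 0 < b) (k1 k2 : ℝ)
    (hk : (k1, k2) ≠ (0, 0))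
    (hk1 : k1 ∈ Set.Icc (-(Real.pi / a)) (Real.pi / a))
    (hk2 : k2 ∈ Set.Icc (-(Real.pi / b)) (Real.pi / b))
    (φ : ℝ → ℝ → ℂ)
    (hφ : ContDiffOn ℝ 1 (fun x : ℝ × ℝ => φ x.1 x.2)
      (Set.Icc ((0 : ℝ), (0 : ℝ)) (a, b)))
    (hgrad1 : ∀ x1 ∈ Set.Icc 0 a,
      pd1 φ x1 b = Complex.exp (Complex.I * k2 * b) * pd1 φ x1 0)
    (hgrad2 : ∀ x2 ∈ Set.Icc 0 b,
      pd2 φ a x2 = Complex.exp (Complex.I * k1 * a) * pd2 φ 0 x2) :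
    ∃ m : ℂ,
      (∀ x1 ∈ Set.Icc 0 a,
        φ x1 b - m = Complex.exp (Complex.I * k2 * b) * (φ x1 0 - m)) ∧
      (∀ x2 ∈ Set.Icc 0 b,
        φ a x2 - m = Complex.exp (Complex.I * k1 * a) * (φ 0 x2 - m)) := by
  set α := Complex.exp (Complex.I * k1 * a) with hαdef
  set β := Complex.exp (Complex.I * k2 * b) with hβdef
  have hcφ := hφ.continuousOn
  -- continuity of the four boundary slices
  have hcont1 : ∀ y ∈ Set.Icc (0:ℝ) b, ContinuousOn (fun x1 : ℝ => φ x1 y) (Set.Icc 0 a) := by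
    intro y hy
    have maps : Set.MapsTo (fun t : ℝ => ((t, y) : ℝ × ℝ)) (Set.Icc 0 a)
        (Set.Icc ((0:ℝ),(0:ℝ)) (a,b)) := by
      intro t ht
      simp only [Set.mem_Icc, Prod.mk_le_mk] at *
      exact ⟨⟨ht.1, hy.1⟩, ⟨ht.2, hy.2⟩⟩
    exact hcφ.comp ((continuous_id.prodMk continuous_const).continuousOn) maps
  have hcont2 : ∀ x ∈ Set.Icc (0:ℝ) a, ContinuousOn (fun x2 : ℝ => φ x x2) (Set.Icc 0 b) := by
    intro x hx
    have maps : Set.MapsTo (fun t : ℝ => ((x, t) : ℝ × ℝ)) (Set.Icc 0 b)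
        (Set.Icc ((0:ℝ),(0:ℝ)) (a,b)) := by
      intro t ht
      simp only [Set.mem_Icc, Prod.mk_le_mk] at *
      exact ⟨⟨hx.1, ht.1⟩, ⟨hx.2, ht.2⟩⟩
    exact hcφ.comp ((continuous_const.prodMk continuous_id).continuousOn) maps
  -- constancy in the first direction
  have hgconst : ∀ x1 ∈ Set.Icc (0:ℝ) a,
      φ x1 b - β * φ x1 0 = φ 0 b - β * φ 0 0 := by
    have hcg : ContinuousOn (fun x1 : ℝ => φ x1 b - β * φ x1 0) (Set.Icc 0 a) :=
      (hcont1 b ⟨hb.le, le_rfl⟩).sub (continuousOn_const.mul (hcont1 0 ⟨le_rfl, hb.le⟩))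
    have hdg : ∀ x ∈ Set.Ioo (0:ℝ) a,
        HasDerivAt (fun x1 : ℝ => φ x1 b - β * φ x1 0) 0 x := by
      intro x hx
      have h1 := slice1_hasDeriv a b φ hφ x hx b ⟨hb.le, le_rfl⟩
      have h2 := slice1_hasDeriv a b φ hφ x hx 0 ⟨le_rfl, hb.le⟩
      have h3 := h1.sub (h2.const_mul β)
      have h4 : pd1 φ x b - β * pd1 φ x 0 = 0 := by
        rw [hgrad1 x (Set.Ioo_subset_Icc_self hx)]
        ring
      rw [h4] at h3
      exact h3
    exact constOn_of_deriv_zero a ha _ hcg hdg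
  -- constancy in the second direction
  have hhconst : ∀ x2 ∈ Set.Icc (0:ℝ) b,
      φ a x2 - α * φ 0 x2 = φ a 0 - α * φ 0 0 := by
    have hcg : ContinuousOn (fun x2 : ℝ => φ a x2 - α * φ 0 x2) (Set.Icc 0 b) :=
      (hcont2 a ⟨ha.le, le_rfl⟩).sub (continuousOn_const.mul (hcont2 0 ⟨le_rfl, ha.le⟩))
    have hdg : ∀ x ∈ Set.Ioo (0:ℝ) b,
        HasDerivAt (fun x2 : ℝ => φ a x2 - α * φ 0 x2) 0 x := by
      intro x hx
      have h1 := slice2_hasDeriv a b φ hφ x hx a ⟨ha.le, le_rfl⟩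
      have h2 := slice2_hasDeriv a b φ hφ x hx 0 ⟨le_rfl, ha.le⟩
      have h3 := h1.sub (h2.const_mul α)
      have h4 : pd2 φ a x - α * pd2 φ 0 x = 0 := by
        rw [hgrad2 x (Set.Ioo_subset_Icc_self hx)]
        ring
      rw [h4] at h3
      exact h3
    exact constOn_of_deriv_zero b hb _ hcg hdg
  -- corner consistency
  have hga := hgconst a ⟨ha.le, le_rfl⟩
  have hvb := hhconst b ⟨hb.le, le_rfl⟩
  have hcons : (1 - α) * (φ 0 b - β * φ 0 0) = (1 - β) * (φ a 0 - α * φ 0 0) := by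
    linear_combination hvb - hga
  have hk' : k1 ≠ 0 ∨ k2 ≠ 0 := by
    by_contra hcon
    push_neg at hcon
    exact hk (by simp [hcon.1, hcon.2])
  rcases hk' with h1 | h2
  · -- α ≠ 1
    have hαne : α ≠ 1 := exp_I_ne_one k1 a ha h1 hk1.1 hk1.2
    have hne : (1 : ℂ) - α ≠ 0 := sub_ne_zero.mpr (Ne.symm hαne)
    refine ⟨(φ a 0 - α * φ 0 0) / (1 - α), ?_, ?_⟩
    · intro x1 hx1
      have hm : (1 - β) * ((φ a 0 - α * φ 0 0) / (1 - α)) = φ 0 b - β * φ 0 0 := by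
        field_simp
        linear_combination -hcons
      linear_combination hgconst x1 hx1 - hm
    · intro x2 hx2
      have hm : (1 - α) * ((φ a 0 - α * φ 0 0) / (1 - α)) = φ a 0 - α * φ 0 0 := by
        field_simp
      linear_combination hhconst x2 hx2 - hm
  · -- β ≠ 1
    have hβne : β ≠ 1 := exp_I_ne_one k2 b hb h2 hk2.1 hk2.2
    have hne : (1 : ℂ) - β ≠ 0 := sub_ne_zero.mpr (Ne.symm hβne)
    refine ⟨(φ 0 b - β * φ 0 0) / (1 - β), ?_, ?_⟩
    · intro x1 hx1
      have hm : (1 - β) * ((φ 0 b - β * φ 0 0) / (1 - β)) = φ 0 b - β * φ 0 0 := by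
        field_simp
      linear_combination hgconst x1 hx1 - hm
    · intro x2 hx2
      have hm : (1 - α) * ((φ 0 b - β * φ 0 0) / (1 - β)) = φ a 0 - α * φ 0 0 := by
        field_simp
        linear_combination hcons
      linear_combination hhconst x2 hx2 - hm
end

section
/- Let Ω = [0,a]×[0,b] and φ ∈ C¹(Ω) such that ∇φ satisfies the vector Bloch boundary conditions with k = 0, i.e., (∂₁φ)(x₁,b) = (∂₁φ)(x₁,0) and (∂₂φ)(a,x₂) = (∂₂φ)(0,x₂). Then with the linear polynomial μ(x) := (φ(a,0)−φ(0,0))/(2a)·(2x₁−a) + (φ(0,b)−φ(0,0))/(2b)·(2x₂−b), the function φ̂ := φ − μ is periodic on Ω: φ̂(x₁,b) = φ̂(x₁,0) for all x₁ ∈ [0,a] and φ̂(a,x₂) = φ̂(0,x₂) for all x₂ ∈ [0,b]. -/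
open Complex

open Set in
/-- A continuous function on `[c,d]` whose derivative vanishes on the open
interior is constant on `[c,d]`. -/
lemma const_of_deriv_zero_interior {c d : ℝ} (hcd : c < d) (g : ℝ → ℂ)
    (hg : ContinuousOn g (Icc c d))
    (hd : ∀ x ∈ Ioo c d, HasDerivAt g 0 x) :
    ∀ x ∈ Icc c d, g x = g c := by
  have key : ∀ y ∈ Ioo c d, ∀ z ∈ Ioo c d, y ≤ z → g z = g y := by
    intro y hy z hz hyz
    have := constant_of_has_deriv_right_zero (f := g) (a := y) (b := z)
      (hg.mono (Icc_subset_Icc hy.1.le hz.2.le))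
      (fun x hx => (hd x ⟨lt_of_lt_of_le hy.1 hx.1, hx.2.trans hz.2⟩).hasDerivWithinAt)
    exact this z ⟨hyz, le_rfl⟩
  have hIoo : ∀ y ∈ Ioo c d, ∀ z ∈ Ioo c d, g z = g y := by
    intro y hy z hz
    rcases le_total y z with h | h
    · exact key y hy z hz h
    · exact (key z hz y hy h).symm
  set m := (c + d) / 2 with hm
  have hmc : m ∈ Ioo c d := ⟨by simp [hm]; linarith, by simp [hm]; linarith⟩
  have endpt : ∀ e ∈ Icc c d, e ∈ closure (Ioo c d) → g e = g m := by
    intro e he hecl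
    haveI : (nhdsWithin e (Ioo c d)).NeBot := mem_closure_iff_nhdsWithin_neBot.1 hecl
    have h1 : Filter.Tendsto g (nhdsWithin e (Ioo c d)) (nhds (g e)) :=
      ((hg e he).mono Ioo_subset_Icc_self)
    have h2 : Filter.Tendsto g (nhdsWithin e (Ioo c d)) (nhds (g m)) := by
      apply Filter.Tendsto.congr' _ tendsto_const_nhds
      filter_upwards [self_mem_nhdsWithin] with t ht
      exact hIoo t ht m hmc
    exact tendsto_nhds_unique h1 h2
  have hcl : closure (Ioo c d) = Icc c d := closure_Ioo hcd.ne
  have hgc : g c = g m := endpt c ⟨le_rfl, hcd.le⟩ (hcl ▸ ⟨le_rfl, hcd.le⟩)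
  intro x hx
  rcases eq_or_lt_of_le hx.1 with h | h
  · rw [← h]
  rcases eq_or_lt_of_le hx.2 with h2 | h2
  · rw [h2, endpt d ⟨hcd.le, le_rfl⟩ (hcl ▸ ⟨hcd.le, le_rfl⟩), hgc]
  · rw [hIoo m hmc x ⟨h, h2⟩, hgc]

/-- in the case `k = 0`, subtracting the explicit linear
polynomial `μ` from `φ` yields a periodic function on `Ω = [0,a]×[0,b]`. -/
theorem stmt_4 (a b : ℝ) (ha : 0 < a) (hb : 0 < b)
    (φ : ℝ → ℝ → ℂ)
    (hφ : ContDiffOn ℝ 1 (fun x : ℝ × ℝ => φ x.1 x.2)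
      (Set.Icc ((0 : ℝ), (0 : ℝ)) (a, b)))
    (hgrad1 : ∀ x1 ∈ Set.Icc 0 a, pd1 φ x1 b = pd1 φ x1 0)
    (hgrad2 : ∀ x2 ∈ Set.Icc 0 b, pd2 φ a x2 = pd2 φ 0 x2) :
    let μ : ℝ → ℝ → ℂ := fun x1 x2 =>
      (φ a 0 - φ 0 0) / (2 * a) * (2 * x1 - a)
        + (φ 0 b - φ 0 0) / (2 * b) * (2 * x2 - b)
    (∀ x1 ∈ Set.Icc 0 a, φ x1 b - μ x1 b = φ x1 0 - μ x1 0) ∧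
    (∀ x2 ∈ Set.Icc 0 b, φ a x2 - μ a x2 = φ 0 x2 - μ 0 x2) := by
  
  intro μ
  open Set in
  have hslice1 : ∀ y ∈ Icc 0 b, ContDiffOn ℝ 1 (fun t => φ t y) (Icc 0 a) := by
    intro y hy
    exact hφ.comp ((contDiff_id.prodMk contDiff_const).contDiffOn)
      (fun t ht => Set.mem_Icc.2 ⟨⟨ht.1, hy.1⟩, ht.2, hy.2⟩)
  open Set in
  have hslice2 : ∀ x ∈ Icc 0 a, ContDiffOn ℝ 1 (fun t => φ x t) (Icc 0 b) := by
    intro x hx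
    exact hφ.comp ((contDiff_const.prodMk contDiff_id).contDiffOn)
      (fun t ht => Set.mem_Icc.2 ⟨⟨hx.1, ht.1⟩, hx.2, ht.2⟩)
  open Set in
  have hd1 : ∀ y ∈ Icc 0 b, ∀ x ∈ Ioo 0 a, HasDerivAt (fun t => φ t y) (pd1 φ x y) x := by
    intro y hy x hx
    have := ((hslice1 y hy).differentiableOn one_ne_zero).differentiableAt
      (Icc_mem_nhds hx.1 hx.2)
    exact this.hasDerivAt
  open Set in
  have hd2 : ∀ x ∈ Icc 0 a, ∀ y ∈ Ioo 0 b, HasDerivAt (fun t => φ x t) (pd2 φ x y) y := by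
    intro x hx y hy
    have := ((hslice2 x hx).differentiableOn one_ne_zero).differentiableAt
      (Icc_mem_nhds hy.1 hy.2)
    exact this.hasDerivAt
  have hb0 : (0:ℝ) ∈ Set.Icc 0 b := ⟨le_rfl, hb.le⟩
  have hbb : b ∈ Set.Icc 0 b := ⟨hb.le, le_rfl⟩
  have ha0 : (0:ℝ) ∈ Set.Icc 0 a := ⟨le_rfl, ha.le⟩
  have haa : a ∈ Set.Icc 0 a := ⟨ha.le, le_rfl⟩
  have hgconst : ∀ x ∈ Set.Icc 0 a, φ x b - φ x 0 = φ 0 b - φ 0 0 := by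
    have := const_of_deriv_zero_interior ha (fun t => φ t b - φ t 0)
      (((hslice1 b hbb).continuousOn).sub ((hslice1 0 hb0).continuousOn))
      (fun x hx => by
        have h := (hd1 b hbb x hx).sub (hd1 0 hb0 x hx)
        rwa [hgrad1 x (Set.Ioo_subset_Icc_self hx), sub_self] at h)
    exact this
  have hhconst : ∀ y ∈ Set.Icc 0 b, φ a y - φ 0 y = φ a 0 - φ 0 0 := by
    have := const_of_deriv_zero_interior hb (fun t => φ a t - φ 0 t)
      (((hslice2 a haa).continuousOn).sub ((hslice2 0 ha0).continuousOn))
      (fun y hy => by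
        have h := (hd2 a haa y hy).sub (hd2 0 ha0 y hy)
        rwa [hgrad2 y (Set.Ioo_subset_Icc_self hy), sub_self] at h)
    exact this
  have ha' : (a:ℂ) ≠ 0 := by exact_mod_cast ha.ne'
  have hb' : (b:ℂ) ≠ 0 := by exact_mod_cast hb.ne'
  constructor
  · intro x1 hx1
    have hg := hgconst x1 hx1
    simp only [μ]
    field_simp
    push_cast
    linear_combination (2 * (a:ℂ) * b) * hg
  · intro x2 hx2
    have hg := hhconst x2 hx2
    simp only [μ]
    field_simp
    push_cast
    linear_combination (2 * (a:ℂ) * b) * hg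
end
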